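/- In QH_α, the relation σ_k · σ_λ = (α q)^{(k + |λ| − |λ↓1|)/n} · σ_{λ↓1} holds for every partition λ ⊆ m×k, where λ↓1 = λ↑(n−1) is the inverse Seidel shift; concretely λ↓1 = (λ₁−1,...,λ_m−1) if λ_m > 0, and (k, λ₁, ..., λ_{m−1}) if λ_m = 0. -/

import Mathlib

/-- The sequence `c = (c_1, …, c_m, 0, 0, …)` of variables of `S = ℚ[c_1, …, c_m]`,
with `c_0 = 1` and `c_i = 0` for `i < 0` or `i > m`. -/
noncomputable def cVar (m : ℕ) : ℤ → MvPolynomial (Fin m) ℚ := fun i =>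
  if h : 1 ≤ i ∧ i ≤ (m : ℤ) then MvPolynomial.X ⟨(i - 1).toNat, by omega⟩
  else if i = 0 then 1 else 0

/-- `σ_p = Δ_{(1^p)}(c) = det(c_{1+j-i})_{p×p}`, extended by `σ_p = 0` for `p < 0`. -/
noncomputable def sigmaP (m : ℕ) : ℤ → MvPolynomial (Fin m) ℚ := fun p =>
  if p < 0 then 0
  else Matrix.det (Matrix.of fun i j : Fin p.toNat => cVar m (1 + (j : ℤ) - (i : ℤ)))

/-- `σ_λ = Δ_λ(σ) = det(σ_{λ_i+j-i})`. -/
noncomputable def sigmaL (m : ℕ) {l : ℕ} (lam : Fin l → ℕ) : MvPolynomial (Fin m) ℚ :=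
  Matrix.det (Matrix.of fun i j : Fin l => sigmaP m ((lam i : ℤ) + (j : ℤ) - (i : ℤ)))

/-- The deformed quantum ring `QH_α = S[q]/⟨σ_{k+1}, …, σ_{n-1}, σ_n + (-1)^m α q⟩`
is the quotient of `Polynomial (MvPolynomial (Fin m) ℚ)` by this ideal. -/
noncomputable def qhIdeal (m k : ℕ) (α : ℚ) :
    Ideal (Polynomial (MvPolynomial (Fin m) ℚ)) :=
  Ideal.span
    ((fun p : ℤ => Polynomial.C (sigmaP m p)) '' Set.Icc ((k : ℤ) + 1) ((m : ℤ) + k - 1) ∪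
      {Polynomial.C (sigmaP m ((m : ℤ) + k)) +
        (-1) ^ m * Polynomial.C (MvPolynomial.C α) * Polynomial.X})

/-- The Seidel shift `λ↑1` of a partition `λ ⊆ m × k`. -/
def upShift (m k : ℕ) (hm : 0 < m) (lam : Fin m → ℕ) : Fin m → ℕ :=
  if lam ⟨0, hm⟩ < k then fun i => lam i + 1
  else fun i => if h : (i : ℕ) + 1 < m then lam ⟨(i : ℕ) + 1, h⟩ else 0

/-- The inverse Seidel shift `λ↓1` of a partition `λ ⊆ m × k`:
`(λ_1 - 1, …, λ_m - 1)` if `λ_m > 0`, and `(k, λ_1, …, λ_{m-1})` if `λ_m = 0`. -/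
def downShift (m k : ℕ) (hm : 0 < m) (lam : Fin m → ℕ) : Fin m → ℕ :=
  if lam ⟨m - 1, Nat.sub_lt hm Nat.one_pos⟩ = 0 then
    fun i => if (i : ℕ) = 0 then k
      else lam ⟨(i : ℕ) - 1, Nat.lt_of_le_of_lt (Nat.sub_le _ _) i.isLt⟩
  else fun i => lam i - 1

/-!
Put `μ = (k, λ₁, …, λ_m)` and expand the `(m+1) × (m+1)` determinant `Δ_μ = det(σ_{μ_i+j-i})`
along its first row `σ_k, σ_{k+1}, …, σ_{k+m}`. In `QH_α` the middle entries vanish and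
`σ_{k+m} = -(-1)^m α q`, which leaves `σ_k σ_λ = Δ_μ + α q Δ_{λ-1}` with `λ - 1 = (λ_i - 1)_i`.
If `λ_m > 0` then `λ - 1 = λ↓1`, and `Δ_μ = 0`: all its row indices satisfy `μ_i + m - i ≥ 1`,
so the recursion `∑_r (-1)^r c_r σ_{p-r} = 0` (for `p ≥ 1`) is a vanishing combination of its
columns. If `λ_m = 0` then `Δ_{λ-1}` has a zero row, and the last row of `Δ_μ` is `(0, …, 0, 1)`,
so `Δ_μ = Δ_{(k, λ₁, …, λ_{m-1})} = σ_{λ↓1}`.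

For `λ↓1 = λ↑(n-1)`: the beta-numbers `λ_i + m - i` of a partition in the `m × k` box are distinct
elements of `{0, …, n-1}` that determine it, and `λ ↦ λ↑1` translates them by `1` modulo `n`.
Hence `λ↑n = λ`, and as `(λ↓1)↑1 = λ`, we get `λ↑(n-1) = (λ↓1)↑n = λ↓1`.
-/

open Finset

section Sigma

variable {m : ℕ}

theorem cVar_zero : cVar m 0 = 1 := by simp [cVar]

theorem cVar_eq_zero_of_neg {i : ℤ} (h : i < 0) : cVar m i = 0 := by
  unfold cVar; rw [dif_neg (by omega), if_neg (by omega)]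

theorem cVar_eq_zero_of_lt {i : ℤ} (h : (m : ℤ) < i) : cVar m i = 0 := by
  unfold cVar; rw [dif_neg (by omega), if_neg (by omega)]

theorem sigmaP_natCast (p : ℕ) :
    sigmaP m p = (Matrix.of fun i j : Fin p => cVar m (1 + (j : ℤ) - (i : ℤ))).det := by
  unfold sigmaP; rw [if_neg (by omega)]; rfl

theorem sigmaP_of_neg {p : ℤ} (h : p < 0) : sigmaP m p = 0 := if_pos h

theorem sigmaP_zero : sigmaP m 0 = 1 := by
  simpa using sigmaP_natCast (m := m) 0

/-- The matrix `(c_{1+j-i})` of `σ_{p+1}` with its first row replaced by `v`; this is the shape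
that reproduces itself under expansion along the first column. -/
noncomputable def hessenberg (m : ℕ) (v : ℕ → MvPolynomial (Fin m) ℚ) (p : ℕ) :
    Matrix (Fin (p + 1)) (Fin (p + 1)) (MvPolynomial (Fin m) ℚ) :=
  Matrix.of (Fin.cases (fun j => v j) fun i j => cVar m ((j : ℤ) - i))

@[simp] theorem hessenberg_zero (v : ℕ → MvPolynomial (Fin m) ℚ) (p : ℕ) (j : Fin (p + 1)) :
    hessenberg m v p 0 j = v j := rfl

@[simp] theorem hessenberg_succ (v : ℕ → MvPolynomial (Fin m) ℚ) (p : ℕ) (i : Fin p)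
    (j : Fin (p + 1)) : hessenberg m v p i.succ j = cVar m ((j : ℤ) - i) := rfl

theorem sigmaP_succ (p : ℕ) :
    sigmaP m (p + 1) = (hessenberg m (fun j => cVar m (j + 1)) p).det := by
  rw [← Nat.cast_succ, sigmaP_natCast]
  congr 1
  refine Matrix.ext fun i j => ?_
  cases i using Fin.cases <;>
    simp only [Matrix.of_apply, hessenberg_zero, hessenberg_succ, Fin.val_succ, Fin.val_zero] <;>
    push_cast <;> ring_nf

theorem det_hessenberg (p : ℕ) (v : ℕ → MvPolynomial (Fin m) ℚ) :
    (hessenberg m v p).det = ∑ j ∈ range (p + 1), (-1) ^ j * v j * sigmaP m (p - j) := by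
  induction p generalizing v with
  | zero => simp [Matrix.det_unique, sigmaP_zero]
  | succ p ih =>
    have hσ : (hessenberg m v (p + 1)).submatrix Fin.succ Fin.succ =
        hessenberg m (fun j => cVar m (j + 1)) p := by
      refine Matrix.ext fun i j => ?_
      cases i using Fin.cases <;>
        simp only [Matrix.submatrix_apply, hessenberg_zero, hessenberg_succ, Fin.val_succ,
          Fin.val_zero] <;>
        push_cast <;> ring_nf
    have htail : (hessenberg m v (p + 1)).submatrix (Fin.succ 0).succAbove Fin.succ =
        hessenberg m (fun j => v (j + 1)) p := by
      refine Matrix.ext fun i j => ?_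
      cases i using Fin.cases <;> simp
    have hsub : hessenberg m v (p + 1) (Fin.succ 0) 0 = 1 := by
      rw [hessenberg_succ]; simpa using cVar_zero
    have hzero (i : Fin p) : hessenberg m v (p + 1) i.succ.succ 0 = 0 := by
      rw [hessenberg_succ]
      exact cVar_eq_zero_of_neg (by rw [Fin.val_zero, Fin.val_succ]; omega)
    rw [Matrix.det_succ_column_zero, Fin.sum_univ_succ, Fin.sum_univ_succ,
      Fintype.sum_eq_zero _ fun i => by rw [hzero, mul_zero, zero_mul], Fin.succAbove_zero, hσ,
      htail, hsub, ← sigmaP_succ, ih, sum_range_succ' _ (p + 1), mul_sum]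
    simp only [Fin.val_zero, pow_zero, hessenberg_zero, CharP.cast_eq_zero, one_mul, Fin.val_succ,
      zero_add, pow_one, neg_mul, mul_one, add_zero, sub_zero, Nat.cast_add, Nat.cast_one]
    ring_nf

theorem sigmaP_succ_eq_sum (p : ℕ) :
    sigmaP m (p + 1) = ∑ j ∈ range (p + 1), (-1) ^ j * cVar m (j + 1) * sigmaP m (p - j) := by
  rw [sigmaP_succ, det_hessenberg]

theorem sum_range_cVar_mul_sigmaP_eq_zero {P : ℤ} (hP : 1 ≤ P) :
    ∑ r ∈ range (m + 1), (-1) ^ r * cVar m r * sigmaP m (P - r) = 0 := by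
  obtain ⟨p, rfl⟩ : ∃ p : ℕ, P = p + 1 := ⟨(P - 1).toNat, by omega⟩
  set f : ℕ → MvPolynomial (Fin m) ℚ := fun j => (-1) ^ j * cVar m (j + 1) * sigmaP m (p - j)
  have hf : ∀ j, min m (p + 1) ≤ j → f j = 0 := by
    intro j hj
    rcases min_le_iff.1 hj with hj | hj
    · simp [f, cVar_eq_zero_of_lt (m := m) (by omega : (m : ℤ) < j + 1)]
    · simp [f, sigmaP_of_neg (m := m) (by omega : (p : ℤ) - j < 0)]
  have htrunc : ∀ a, min m (p + 1) ≤ a →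
      ∑ j ∈ range a, f j = ∑ j ∈ range (min m (p + 1)), f j := fun a ha =>
    (sum_subset (range_subset_range.2 ha) fun j _ hj => hf j (not_lt.1 (mt mem_range.2 hj))).symm
  have hσ : sigmaP m (p + 1) = ∑ j ∈ range (p + 1), f j := sigmaP_succ_eq_sum p
  have hterm (j : ℕ) :
      (-1) ^ (j + 1) * cVar m (j + 1 : ℕ) * sigmaP m (p + 1 - (j + 1 : ℕ)) = -f j := by
    simp only [f]; push_cast; ring_nf
  rw [htrunc (p + 1) (min_le_right _ _)] at hσ
  rw [sum_range_succ', sum_congr rfl fun j _ => hterm j, sum_neg_distrib,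
    htrunc m (min_le_left _ _), ← hσ]
  simp [cVar_zero]

end Sigma

/-- The Jacobi–Trudi matrix of `sigmaL`, for rows `μ` that may be negative, such as `λ - 1`. -/
noncomputable def jtMatrix (m : ℕ) {l : ℕ} (μ : Fin l → ℤ) :
    Matrix (Fin l) (Fin l) (MvPolynomial (Fin m) ℚ) :=
  Matrix.of fun i j => sigmaP m (μ i + j - i)

section JacobiTrudi

variable {m l : ℕ}

@[simp] theorem jtMatrix_apply (μ : Fin l → ℤ) (i j : Fin l) :
    jtMatrix m μ i j = sigmaP m (μ i + j - i) := rfl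

theorem sigmaL_eq_det_jtMatrix (lam : Fin l → ℕ) :
    sigmaL m lam = (jtMatrix m fun i => (lam i : ℤ)).det := rfl

theorem jtMatrix_cons_submatrix_succ_succ (a : ℤ) (μ : Fin l → ℤ) :
    (jtMatrix m (Fin.cons a μ : Fin (l + 1) → ℤ)).submatrix Fin.succ Fin.succ = jtMatrix m μ := by
  refine Matrix.ext fun i j => ?_
  simp only [Matrix.submatrix_apply, jtMatrix_apply, Fin.cons_succ, Fin.val_succ]
  push_cast
  ring_nf

theorem jtMatrix_cons_submatrix_succ_castSucc (a : ℤ) (μ : Fin l → ℤ) :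
    (jtMatrix m (Fin.cons a μ : Fin (l + 1) → ℤ)).submatrix Fin.succ Fin.castSucc =
      jtMatrix m fun i => μ i - 1 := by
  refine Matrix.ext fun i j => ?_
  simp only [Matrix.submatrix_apply, jtMatrix_apply, Fin.cons_succ, Fin.val_succ,
    Fin.val_castSucc]
  push_cast
  ring_nf

theorem det_jtMatrix_eq_zero_of_le (μ : Fin l → ℤ) (i : Fin l) (h : μ i + l ≤ i) :
    (jtMatrix m μ).det = 0 :=
  Matrix.det_eq_zero_of_row_eq_zero i fun j => sigmaP_of_neg (by have := j.isLt; omega)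

theorem det_jtMatrix_of_last_eq_zero (μ : Fin (l + 1) → ℤ) (h : μ (Fin.last l) = 0) :
    (jtMatrix m μ).det = (jtMatrix m (Fin.init μ)).det := by
  rw [Matrix.det_succ_row _ (Fin.last l), Fintype.sum_eq_single (Fin.last l)]
  · rw [jtMatrix_apply, h, zero_add, sub_self, sigmaP_zero, mul_one, ← two_mul, pow_mul,
      neg_one_sq, one_pow, one_mul, Fin.succAbove_last]
    rfl
  · intro j hj
    have hjl : (j : ℕ) < l := Fin.val_lt_last hj
    rw [jtMatrix_apply, h, sigmaP_of_neg (by rw [Fin.val_last]; omega), mul_zero, zero_mul]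

end JacobiTrudi

theorem det_jtMatrix_eq_zero {m : ℕ} (μ : Fin (m + 1) → ℤ)
    (h : ∀ i : Fin (m + 1), (i : ℕ) < μ i + m) : (jtMatrix m μ).det = 0 := by
  refine Matrix.exists_mulVec_eq_zero_iff.1
    ⟨fun j => (-1) ^ (m - j : ℕ) * cVar m (m - j : ℕ), fun h0 => ?_, funext fun i => ?_⟩
  · simpa [cVar_zero] using congrFun h0 (Fin.last m)
  · simp only [Matrix.mulVec, dotProduct, jtMatrix_apply]
    rw [Pi.zero_apply, Fin.sum_univ_eq_sum_range
      (fun j => sigmaP m (μ i + j - i) * ((-1) ^ (m - j) * cVar m (m - j : ℕ))),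
      ← sum_range_reflect,
      ← sum_range_cVar_mul_sigmaP_eq_zero (P := μ i + m - i) (by linarith [h i])]
    refine sum_congr rfl fun j hj => ?_
    have hjm : j ≤ m := Nat.lt_succ_iff.1 (mem_range.1 hj)
    rw [show m + 1 - 1 - j = m - j by omega, Nat.sub_sub_self hjm]
    push_cast [Nat.cast_sub hjm]
    ring_nf

section QuantumRing

variable {m k : ℕ} {α : ℚ}

theorem mk_C_sigmaP_eq_zero {p : ℤ} (h₁ : (k : ℤ) + 1 ≤ p) (h₂ : p ≤ m + k - 1) :
    Ideal.Quotient.mk (qhIdeal m k α) (Polynomial.C (sigmaP m p)) = 0 :=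
  Ideal.Quotient.eq_zero_iff_mem.2 (Ideal.subset_span (Or.inl ⟨p, ⟨h₁, h₂⟩, rfl⟩))

theorem mk_C_sigmaP_m_add_k :
    Ideal.Quotient.mk (qhIdeal m k α) (Polynomial.C (sigmaP m (m + k))) =
      -((-1) ^ m *
        Ideal.Quotient.mk (qhIdeal m k α) (Polynomial.C (MvPolynomial.C α) * Polynomial.X)) := by
  have h : Polynomial.C (sigmaP m (m + k)) +
      (-1) ^ m * Polynomial.C (MvPolynomial.C α) * Polynomial.X ∈ qhIdeal m k α :=
    Ideal.subset_span (Or.inr rfl)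
  rw [← Ideal.Quotient.eq_zero_iff_mem] at h
  refine eq_neg_of_add_eq_zero_left ?_
  simpa only [map_add, map_mul, map_pow, map_neg, map_one, mul_assoc] using h

theorem mk_C_sigmaP_mul_det_jtMatrix (hm : 0 < m) (μ : Fin m → ℤ) :
    Ideal.Quotient.mk (qhIdeal m k α) (Polynomial.C (sigmaP m k * (jtMatrix m μ).det)) =
      Ideal.Quotient.mk (qhIdeal m k α) (Polynomial.C (jtMatrix m (Fin.cons (k : ℤ) μ)).det) +
        Ideal.Quotient.mk (qhIdeal m k α) (Polynomial.C (MvPolynomial.C α) * Polynomial.X) *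
          Ideal.Quotient.mk (qhIdeal m k α) (Polynomial.C (jtMatrix m fun i => μ i - 1).det) := by
  set φ := (Ideal.Quotient.mk (qhIdeal m k α)).comp Polynomial.C
  have hrow : φ (jtMatrix m (Fin.cons (k : ℤ) μ)).det =
      φ (sigmaP m k) * φ (jtMatrix m μ).det +
        (-1) ^ m * φ (sigmaP m (m + k)) * φ (jtMatrix m fun i => μ i - 1).det := by
    rw [Matrix.det_succ_row_zero, map_sum,
      Fintype.sum_eq_add 0 (Fin.last m) (by simpa [Fin.ext_iff] using hm.ne)]
    · simp [Fin.succAbove_last, jtMatrix_cons_submatrix_succ_succ,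
        jtMatrix_cons_submatrix_succ_castSucc, add_comm (k : ℤ)]
    · rintro j ⟨hj0, hjl⟩
      have h1 : 0 < (j : ℕ) := Fin.pos_iff_ne_zero.2 hj0
      have h2 : (j : ℕ) < m := Fin.val_lt_last hjl
      have hσ : φ (sigmaP m (k + j)) = 0 := mk_C_sigmaP_eq_zero (by omega) (by omega)
      simp only [map_mul, jtMatrix_apply, Fin.cons_zero, Fin.val_zero, Nat.cast_zero, sub_zero, hσ]
      ring
  have hsign : ((-1 : Polynomial (MvPolynomial (Fin m) ℚ) ⧸ qhIdeal m k α) ^ m) * (-1) ^ m = 1 := by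
    rw [← pow_add, ← two_mul, pow_mul]; norm_num
  simp only [φ, RingHom.comp_apply] at hrow
  rw [mk_C_sigmaP_m_add_k] at hrow
  rw [Polynomial.C_mul, map_mul]
  linear_combination -hrow +
    Ideal.Quotient.mk (qhIdeal m k α) (Polynomial.C (MvPolynomial.C α) * Polynomial.X) *
      Ideal.Quotient.mk (qhIdeal m k α) (Polynomial.C (jtMatrix m fun i => μ i - 1).det) * hsign

end QuantumRing

def IsPartitionInBox (k : ℕ) {m : ℕ} (lam : Fin m → ℕ) : Prop :=
  Antitone lam ∧ ∀ i, lam i ≤ k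

section Shifts

variable {m k : ℕ} (hm : 0 < m) {lam : Fin m → ℕ}

theorem pos_of_last_ne_zero (hanti : Antitone lam)
    (h : lam ⟨m - 1, Nat.sub_lt hm Nat.one_pos⟩ ≠ 0) (i : Fin m) : 0 < lam i :=
  (Nat.pos_of_ne_zero h).trans_le (hanti (Fin.mk_le_mk.2 (by omega)))

theorem downShift_of_last_eq_zero (h : lam ⟨m - 1, Nat.sub_lt hm Nat.one_pos⟩ = 0) :
    downShift m k hm lam = Fin.init (Fin.cons k lam : Fin (m + 1) → ℕ) := by
  funext i
  rw [downShift, if_pos h]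
  obtain ⟨_ | j, hj⟩ := i <;> rfl

theorem IsPartitionInBox.upShift (h : IsPartitionInBox k lam) :
    IsPartitionInBox k (upShift m k hm lam) := by
  obtain ⟨hanti, hle⟩ := h
  unfold _root_.upShift
  split_ifs with h0
  · exact ⟨fun i j hij => Nat.add_le_add_right (hanti hij) 1,
      fun i => (hanti (show ⟨0, hm⟩ ≤ i from Nat.zero_le _)).trans_lt h0⟩
  · refine ⟨fun i j hij => ?_, fun i => ?_⟩ <;> dsimp only <;> split_ifs
    all_goals first
      | exact le_rfl | exact Nat.zero_le _ | exact hle _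
      | (exfalso; rw [Fin.le_def] at hij; omega)
      | exact hanti (Fin.mk_le_mk.2 (by rw [Fin.le_def] at hij; omega))

theorem IsPartitionInBox.downShift (h : IsPartitionInBox k lam) :
    IsPartitionInBox k (downShift m k hm lam) := by
  obtain ⟨hanti, hle⟩ := h
  unfold _root_.downShift
  split_ifs with h0
  · refine ⟨fun i j hij => ?_, fun i => ?_⟩ <;> dsimp only <;> split_ifs
    all_goals first
      | exact le_rfl | exact hle _
      | (exfalso; rw [Fin.le_def] at hij; omega)
      | exact hanti (Fin.mk_le_mk.2 (by rw [Fin.le_def] at hij; omega))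
  · exact ⟨fun i j hij => Nat.sub_le_sub_right (hanti hij) 1,
      fun i => (Nat.sub_le _ _).trans (hle i)⟩

theorem IsPartitionInBox.iterate_upShift (h : IsPartitionInBox k lam) (t : ℕ) :
    IsPartitionInBox k ((_root_.upShift m k hm)^[t] lam) :=
  Function.Iterate.rec _ h (fun _ => IsPartitionInBox.upShift hm) t

theorem upShift_downShift (h : IsPartitionInBox k lam) :
    upShift m k hm (downShift m k hm lam) = lam := by
  obtain ⟨hanti, hle⟩ := h
  by_cases h0 : lam ⟨m - 1, Nat.sub_lt hm Nat.one_pos⟩ = 0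
  · have hk : ¬downShift m k hm lam ⟨0, hm⟩ < k := by simp [downShift, h0]
    funext i
    rw [upShift, if_neg hk]
    split_ifs with hi
    · simp [downShift, h0]
    · rw [← h0]
      congr
      omega
  · have hpos := pos_of_last_ne_zero hm hanti h0
    have hk : downShift m k hm lam ⟨0, hm⟩ < k := by
      have := hle ⟨0, hm⟩
      have := hpos ⟨0, hm⟩
      simp only [downShift, if_neg h0]
      omega
    funext i
    have := hpos i
    rw [upShift, if_pos hk]
    simp only [downShift, if_neg h0]
    omega

end Shifts

/-- The beta-numbers `λ_i + m - i` (with `i` counted from `1`) of `λ`, read modulo `n = m + k`. -/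
def betaSet (m k : ℕ) (lam : Fin m → ℕ) : Set (ZMod (m + k)) :=
  Set.range fun i : Fin m => ((lam i + (m - 1 - i) : ℕ) : ZMod (m + k))

section BetaSet

variable {m k : ℕ} {lam : Fin m → ℕ}

theorem betaSet_upShift (hm : 0 < m) (h : IsPartitionInBox k lam) :
    betaSet m k (upShift m k hm lam) = (· + 1) '' betaSet m k lam := by
  obtain ⟨l, rfl⟩ : ∃ l, m = l + 1 := ⟨m - 1, by omega⟩
  rw [betaSet, betaSet, ← Set.range_comp, upShift]
  split_ifs with h0
  · congr 1
    funext i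
    simp only [Function.comp_apply]
    push_cast
    ring
  · conv_rhs => rw [← (finRotate (l + 1)).surjective.range_comp]
    congr 1
    funext i
    simp only [Function.comp_apply]
    by_cases hi : i = Fin.last l
    · have hk : lam 0 = k := le_antisymm (h.2 0) (not_lt.1 h0)
      have hn : ((l + 1 + k : ℕ) : ZMod (l + 1 + k)) = 0 := ZMod.natCast_self _
      subst hi
      rw [dif_neg (by simp), finRotate_last, hk]
      simp only [Fin.val_last, Fin.val_zero, Nat.add_sub_cancel, Nat.sub_self, Nat.sub_zero]
      push_cast at hn ⊢
      linear_combination -hn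
    · have hlt : (i : ℕ) + 1 < l + 1 := by have := Fin.val_lt_last hi; omega
      rw [dif_pos hlt, show finRotate (l + 1) i = ⟨i + 1, hlt⟩ from
        Fin.ext (coe_finRotate_of_ne_last hi), Nat.sub_sub, Nat.sub_sub,
        show l + 1 - (1 + i) = l + 1 - (1 + (i + 1)) + 1 by omega]
      push_cast
      ring

theorem betaSet_iterate_upShift (hm : 0 < m) (h : IsPartitionInBox k lam) (t : ℕ) :
    betaSet m k ((upShift m k hm)^[t] lam) = (· + (t : ZMod (m + k))) '' betaSet m k lam := by
  induction t with
  | zero => simp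
  | succ t ih =>
    rw [Function.iterate_succ_apply', betaSet_upShift hm (h.iterate_upShift hm t), ih,
      Set.image_image]
    push_cast
    simp only [add_assoc]

theorem IsPartitionInBox.eq_of_betaSet_eq {mu : Fin m → ℕ} (hlam : IsPartitionInBox k lam)
    (hmu : IsPartitionInBox k mu) (h : betaSet m k lam = betaSet m k mu) : lam = mu := by
  set b : (Fin m → ℕ) → Fin m → ℕ := fun ν i => ν i + (m - 1 - i)
  have hanti (ν : Fin m → ℕ) (hν : IsPartitionInBox k ν) : StrictAnti (b ν) := by
    intro i j hij
    have := hν.1 hij.le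
    simp only [b]
    omega
  have hrange (ν : Fin m → ℕ) (hν : IsPartitionInBox k ν) :
      Set.range (b ν) = ZMod.val '' betaSet m k ν := by
    rw [betaSet, ← Set.range_comp]
    congr 1
    funext i
    exact (ZMod.val_cast_of_lt (by have := hν.2 i; simp only [b]; omega)).symm
  have hb : b lam = b mu := ((hanti lam hlam).range_inj (hanti mu hmu)).1 <| by
    rw [hrange lam hlam, hrange mu hmu, h]
  funext i
  have := congrFun hb i
  simp only [b] at this
  omega

theorem isPeriodicPt_upShift (hm : 0 < m) (h : IsPartitionInBox k lam) :
    Function.IsPeriodicPt (upShift m k hm) (m + k) lam :=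
  (h.iterate_upShift hm _).eq_of_betaSet_eq h (by simp [betaSet_iterate_upShift hm h])

theorem downShift_eq_iterate_upShift (hm : 0 < m) (h : IsPartitionInBox k lam) :
    downShift m k hm lam = (upShift m k hm)^[m + k - 1] lam := by
  calc downShift m k hm lam = (upShift m k hm)^[m + k] (downShift m k hm lam) :=
        (isPeriodicPt_upShift hm (h.downShift hm)).eq.symm
    _ = (upShift m k hm)^[m + k - 1] (upShift m k hm (downShift m k hm lam)) := by
        rw [← Function.iterate_succ_apply, Nat.succ_eq_add_one, Nat.sub_add_cancel (by omega)]
    _ = (upShift m k hm)^[m + k - 1] lam := by rw [upShift_downShift hm h]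

end BetaSet

theorem Fin.cons_last_of_pos {m : ℕ} (hm : 0 < m) {α : Type*} (a : α) (f : Fin m → α) :
    (Fin.cons a f : Fin (m + 1) → α) (Fin.last m) = f ⟨m - 1, Nat.sub_lt hm Nat.one_pos⟩ := by
  rw [show Fin.last m = Fin.succ ⟨m - 1, Nat.sub_lt hm Nat.one_pos⟩ from
    Fin.ext (by rw [Fin.val_last, Fin.val_succ, Fin.val_mk]; omega), Fin.cons_succ]

section Pieri

variable {m k : ℕ} {α : ℚ} (hm : 0 < m) {lam : Fin m → ℕ}

theorem mk_C_sigmaP_mul_sigmaL_of_last_eq_zero (h : lam ⟨m - 1, by omega⟩ = 0) :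
    Ideal.Quotient.mk (qhIdeal m k α) (Polynomial.C (sigmaP m k * sigmaL m lam)) =
      Ideal.Quotient.mk (qhIdeal m k α) (Polynomial.C (sigmaL m (downShift m k hm lam))) := by
  have hlast : (Fin.cons (k : ℤ) (fun i => (lam i : ℤ)) : Fin (m + 1) → ℤ) (Fin.last m) = 0 := by
    rw [Fin.cons_last_of_pos hm, h, Nat.cast_zero]
  have hinit : Fin.init (Fin.cons (k : ℤ) fun i => (lam i : ℤ) : Fin (m + 1) → ℤ) =
      fun i => ((Fin.init (Fin.cons k lam : Fin (m + 1) → ℕ) i : ℕ) : ℤ) := by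
    rw [← Function.comp_def Nat.cast lam, ← Fin.comp_cons, ← Fin.comp_init]
    rfl
  rw [sigmaL_eq_det_jtMatrix, mk_C_sigmaP_mul_det_jtMatrix hm,
    det_jtMatrix_eq_zero_of_le (fun i => (lam i : ℤ) - 1) ⟨m - 1, by omega⟩ (by dsimp only; omega),
    det_jtMatrix_of_last_eq_zero _ hlast, hinit, downShift_of_last_eq_zero hm h,
    sigmaL_eq_det_jtMatrix, Polynomial.C_0, map_zero]
  ring

theorem mk_C_sigmaP_mul_sigmaL_of_last_ne_zero (hanti : Antitone lam)
    (h : lam ⟨m - 1, by omega⟩ ≠ 0) :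
    Ideal.Quotient.mk (qhIdeal m k α) (Polynomial.C (sigmaP m k * sigmaL m lam)) =
      Ideal.Quotient.mk (qhIdeal m k α) (Polynomial.C (MvPolynomial.C α) * Polynomial.X) *
        Ideal.Quotient.mk (qhIdeal m k α) (Polynomial.C (sigmaL m (downShift m k hm lam))) := by
  have hpos := pos_of_last_ne_zero hm hanti h
  have hdown : (fun i => ((downShift m k hm lam i : ℕ) : ℤ)) = fun i => (lam i : ℤ) - 1 := by
    funext i
    rw [downShift, if_neg h, Nat.cast_sub (hpos i), Nat.cast_one]
  rw [sigmaL_eq_det_jtMatrix, mk_C_sigmaP_mul_det_jtMatrix hm, det_jtMatrix_eq_zero _ (fun i => ?_),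
    sigmaL_eq_det_jtMatrix, hdown, Polynomial.C_0, map_zero, zero_add]
  cases i using Fin.cases with
  | zero => simp only [Fin.val_zero, Nat.cast_zero, Fin.cons_zero]; omega
  | succ i => simp only [Fin.val_succ, Fin.cons_succ]; have := hpos i; omega

theorem sum_downShift_of_last_eq_zero (h : lam ⟨m - 1, by omega⟩ = 0) :
    ∑ i, downShift m k hm lam i = k + ∑ i, lam i := by
  have hsum := Fin.sum_univ_castSucc (Fin.cons k lam : Fin (m + 1) → ℕ)
  rw [Fin.sum_cons, Fin.cons_last_of_pos hm, h, add_zero] at hsum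
  rw [downShift_of_last_eq_zero hm h, hsum]
  rfl

theorem sum_downShift_add_of_last_ne_zero (hanti : Antitone lam)
    (h : lam ⟨m - 1, by omega⟩ ≠ 0) : ∑ i, downShift m k hm lam i + m = ∑ i, lam i := by
  have hpos := pos_of_last_ne_zero hm hanti h
  rw [downShift, if_neg h]
  calc ∑ i, (lam i - 1) + m = ∑ i, (lam i - 1 + 1) := by simp [sum_add_distrib]
    _ = ∑ i, lam i := sum_congr rfl fun i _ => Nat.sub_add_cancel (hpos i)

end Pieri

theorem quantum_pieri_sigmak_seidel_general (m k : ℕ) (hm : 0 < m) (α : ℚ)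
    (lam : Fin m → ℕ)
    (hanti : ∀ i j : Fin m, i ≤ j → lam j ≤ lam i) (hbound : ∀ i, lam i ≤ k) :
    Ideal.Quotient.mk (qhIdeal m k α)
        (Polynomial.C (sigmaP m (k : ℤ) * sigmaL m lam)) =
      (Ideal.Quotient.mk (qhIdeal m k α)
          (Polynomial.C (MvPolynomial.C α) * Polynomial.X)) ^
          ((k + (∑ i, lam i) - ∑ i, downShift m k hm lam i) / (m + k)) *
        Ideal.Quotient.mk (qhIdeal m k α)
          (Polynomial.C (sigmaL m (downShift m k hm lam))) ∧
    downShift m k hm lam = (upShift m k hm)^[m + k - 1] lam := by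
  refine ⟨?_, downShift_eq_iterate_upShift hm ⟨hanti, hbound⟩⟩
  by_cases h : lam ⟨m - 1, by omega⟩ = 0
  · rw [sum_downShift_of_last_eq_zero hm h, Nat.sub_self, Nat.zero_div, pow_zero, one_mul]
    exact mk_C_sigmaP_mul_sigmaL_of_last_eq_zero hm h
  · rw [← sum_downShift_add_of_last_ne_zero hm hanti h,
      show k + (∑ i, downShift m k hm lam i + m) - ∑ i, downShift m k hm lam i = m + k by omega,
      Nat.div_self (by omega), pow_one]
    exact mk_C_sigmaP_mul_sigmaL_of_last_ne_zero hm hanti h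

/-- In `QH_α` one has `σ_k σ_λ = (α q)^{(k + |λ| - |λ↓1|)/n} σ_{λ↓1}`, where
the inverse Seidel shift satisfies `λ↓1 = λ↑(n-1)`. -/
theorem quantum_pieri_sigmak_seidel (m k : ℕ) (hm : 0 < m) (hk : 0 < k) (α : ℚ)
    (lam : Fin m → ℕ)
    (hanti : ∀ i j : Fin m, i ≤ j → lam j ≤ lam i) (hbound : ∀ i, lam i ≤ k) :
    Ideal.Quotient.mk (qhIdeal m k α)
        (Polynomial.C (sigmaP m (k : ℤ) * sigmaL m lam)) =
      (Ideal.Quotient.mk (qhIdeal m k α)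
          (Polynomial.C (MvPolynomial.C α) * Polynomial.X)) ^
          ((k + (∑ i, lam i) - ∑ i, downShift m k hm lam i) / (m + k)) *
        Ideal.Quotient.mk (qhIdeal m k α)
          (Polynomial.C (sigmaL m (downShift m k hm lam))) ∧
    downShift m k hm lam = (upShift m k hm)^[m + k - 1] lam :=
  quantum_pieri_sigmak_seidel_general m k hm α lam hanti hbound
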